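/- The elliptic alpha function satisfies the duplication formula α(4r) = (1 + k_{4r})² α(r) − 2√r · k_{4r}, where k_{4r} is the singular modulus of order 4r. -/

import Mathlib

/-!
Gauss's substitution `sin φ = (1 + b) sin θ / (1 + b sin² θ)` (the ascending Landen
transformation) relates the complete integrals of modulus `2√b / (1 + b)` to those of modulus `b`:
`K(2√b/(1+b)) = (1 + b) K(b)` and `E(2√b/(1+b)) = 2 E(b) / (1 + b) - (1 - b) K(b)`.
The complementary modulus of `2√b / (1 + b)` is `(1 - b) / (1 + b)`, whose own Landen image is
`√(1 - b²)`; hence the ratio `K(k')/K(k)` at `b` is twice its value at `2√b / (1 + b)`.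
Since that ratio is strictly decreasing in `k`, `k_{4r}` is the `b` with `2√b / (1 + b) = k_r`,
and the duplication formula becomes an algebraic identity between `K(b)` and `E(b)`.
-/

open Real Filter

/-- Complete elliptic integral of the first kind, `K(k) = ∫₀^{π/2} dt/√(1-k² sin² t)`. -/
noncomputable def ellipticK (k : ℝ) : ℝ :=
  ∫ t in (0:ℝ)..(π/2), 1 / Real.sqrt (1 - k^2 * Real.sin t ^ 2)

/-- Complete elliptic integral of the second kind, `E(k) = ∫₀^{π/2} √(1-k² sin² t) dt`. -/
noncomputable def ellipticE (k : ℝ) : ℝ :=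
  ∫ t in (0:ℝ)..(π/2), Real.sqrt (1 - k^2 * Real.sin t ^ 2)

/-- The elliptic alpha function value `α(r)`, expressed in terms of the singular
modulus `k = k_r`:  `α(r) = π/(4K(k)²) − √r (E(k)/K(k) − 1)`. -/
noncomputable def ellipticAlpha (r k : ℝ) : ℝ :=
  π / (4 * ellipticK k ^ 2) - Real.sqrt r * (ellipticE k / ellipticK k - 1)

open intervalIntegral Set
open MeasureTheory (volume)

lemma one_sub_sq_mul_sin_sq_pos {k : ℝ} (hk : k ^ 2 < 1) (t : ℝ) :
    0 < 1 - k ^ 2 * sin t ^ 2 := by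
  nlinarith [mul_le_mul_of_nonneg_left (sin_sq_le_one t) (sq_nonneg k)]

lemma continuous_inv_sqrt_one_sub_sq_mul_sin_sq {k : ℝ} (hk : k ^ 2 < 1) :
    Continuous fun t => 1 / √(1 - k ^ 2 * sin t ^ 2) :=
  continuous_const.div (by fun_prop) fun t => (sqrt_pos.2 (one_sub_sq_mul_sin_sq_pos hk t)).ne'

lemma ellipticK_pos {k : ℝ} (hk : k ^ 2 < 1) : 0 < ellipticK k := by
  refine intervalIntegral_pos_of_pos_on
    ((continuous_inv_sqrt_one_sub_sq_mul_sin_sq hk).intervalIntegrable _ _) (fun t _ => ?_)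
    (by positivity)
  have := one_sub_sq_mul_sin_sq_pos hk t
  positivity

lemma ellipticK_strictMonoOn : StrictMonoOn ellipticK (Ico 0 1) := by
  intro a ⟨ha₀, ha₁⟩ c ⟨hc₀, hc₁⟩ hac
  have hsq : a ^ 2 < c ^ 2 := by nlinarith
  have hc2 : c ^ 2 < 1 := by nlinarith
  have hmono : ∀ t, 1 / √(1 - a ^ 2 * sin t ^ 2) ≤ 1 / √(1 - c ^ 2 * sin t ^ 2) := fun t =>
    one_div_le_one_div_of_le (sqrt_pos.2 (one_sub_sq_mul_sin_sq_pos hc2 t))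
      (sqrt_le_sqrt (by nlinarith [mul_le_mul_of_nonneg_right hsq.le (sq_nonneg (sin t))]))
  refine integral_lt_integral_of_continuousOn_of_le_of_exists_lt (by positivity)
    (continuous_inv_sqrt_one_sub_sq_mul_sin_sq (by nlinarith)).continuousOn
    (continuous_inv_sqrt_one_sub_sq_mul_sin_sq hc2).continuousOn (fun t _ => hmono t)
    ⟨π / 2, ⟨by positivity, le_rfl⟩, ?_⟩
  simp only [sin_pi_div_two, one_pow, mul_one]
  exact one_div_lt_one_div_of_lt (sqrt_pos.2 (by linarith))
    (sqrt_lt_sqrt (by linarith) (by linarith))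

lemma ellipticK_complement_div_strictAntiOn :
    StrictAntiOn (fun k => ellipticK √(1 - k ^ 2) / ellipticK k) (Ioo 0 1) := by
  intro x ⟨hx₀, hx₁⟩ y ⟨hy₀, hy₁⟩ hxy
  have hy' : √(1 - y ^ 2) < √(1 - x ^ 2) := sqrt_lt_sqrt (by nlinarith) (by nlinarith)
  have hx' : √(1 - x ^ 2) < 1 := by
    rw [sqrt_lt' one_pos]; nlinarith
  have hK' := ellipticK_strictMonoOn ⟨sqrt_nonneg _, hy'.trans hx'⟩ ⟨sqrt_nonneg _, hx'⟩ hy'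
  have hK := ellipticK_strictMonoOn ⟨hx₀.le, hx₁⟩ ⟨hy₀.le, hy₁⟩ hxy
  have hKx : 0 < ellipticK x := ellipticK_pos (by nlinarith)
  have hKy' : 0 < ellipticK √(1 - y ^ 2) :=
    ellipticK_pos (by nlinarith [sqrt_nonneg (1 - y ^ 2), hy'.trans hx'])
  calc ellipticK √(1 - y ^ 2) / ellipticK y < ellipticK √(1 - x ^ 2) / ellipticK y :=
        div_lt_div_of_pos_right hK' (hKx.trans hK)
    _ < ellipticK √(1 - x ^ 2) / ellipticK x := div_lt_div_of_pos_left (hKy'.trans hK') hKx hK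

noncomputable def landenModulus (b : ℝ) : ℝ := 2 * √b / (1 + b)

lemma sqrt_one_sub_landenModulus_sq {b : ℝ} (hb₀ : 0 ≤ b) (hb₁ : b ≤ 1) :
    √(1 - landenModulus b ^ 2) = (1 - b) / (1 + b) := by
  rw [landenModulus, div_pow, mul_pow, sq_sqrt hb₀,
    show 1 - 2 ^ 2 * b / (1 + b) ^ 2 = ((1 - b) / (1 + b)) ^ 2 by field_simp; ring]
  exact sqrt_sq (div_nonneg (by linarith) (by linarith))

lemma landenModulus_one_sub_div_one_add {c : ℝ} (hc₀ : -1 < c) (hc₁ : c ≤ 1) :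
    landenModulus ((1 - c) / (1 + c)) = √(1 - c ^ 2) := by
  have h1c : 0 < 1 + c := by linarith
  rw [landenModulus, show 1 + (1 - c) / (1 + c) = 2 / (1 + c) by field_simp; ring,
    show 1 - c ^ 2 = (1 - c) / (1 + c) * (1 + c) ^ 2 by field_simp; ring,
    sqrt_mul (div_nonneg (by linarith) h1c.le), sqrt_sq h1c.le]
  field_simp

lemma exists_landenModulus_eq {k : ℝ} (hk : k ∈ Ioo 0 1) :
    ∃ b ∈ Ioo 0 1, landenModulus b = k := by
  obtain ⟨hk₀, hk₁⟩ := hk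
  have hk' : 0 < √(1 - k ^ 2) := sqrt_pos.2 (by nlinarith)
  have hk'₁ : √(1 - k ^ 2) < 1 := by rw [sqrt_lt' one_pos]; nlinarith
  refine ⟨(1 - √(1 - k ^ 2)) / (1 + √(1 - k ^ 2)),
    ⟨div_pos (by linarith) (by linarith), ?_⟩, ?_⟩
  · rw [div_lt_one (by linarith)]; linarith
  · rw [landenModulus_one_sub_div_one_add (by linarith) hk'₁.le, sq_sqrt (by nlinarith),
      sub_sub_cancel, sqrt_sq hk₀.le]

section Landen

variable {b : ℝ}

lemma one_add_mul_sin_sq_pos (hb : b ^ 2 < 1) (θ : ℝ) : 0 < 1 + b * sin θ ^ 2 := by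
  have := sin_sq_le_one θ
  rcases le_total 0 b with h | h
  · positivity
  · nlinarith

noncomputable def landenAmplitude (b θ : ℝ) : ℝ :=
  arcsin ((1 + b) * sin θ / (1 + b * sin θ ^ 2))

lemma sin_landenAmplitude (hb : b ^ 2 < 1) (θ : ℝ) :
    sin (landenAmplitude b θ) = (1 + b) * sin θ / (1 + b * sin θ ^ 2) := by
  have hd := one_add_mul_sin_sq_pos hb θ
  have hq := one_sub_sq_mul_sin_sq_pos hb θ
  -- `(1 + b s²)² - (1 + b)² s² = (1 - s²)(1 - b² s²)`
  obtain ⟨hlo, hhi⟩ := abs_le_of_sq_le_sq' (a := (1 + b) * sin θ) (b := 1 + b * sin θ ^ 2)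
    (by nlinarith [mul_nonneg (sub_nonneg.2 (sin_sq_le_one θ)) hq.le]) hd.le
  rw [landenAmplitude, sin_arcsin ((le_div_iff₀ hd).2 (by linarith)) ((div_le_one hd).2 hhi)]

lemma hasDerivAt_landenAmplitude (hb : b ^ 2 < 1) {θ : ℝ} (hθ : 0 < cos θ) :
    HasDerivAt (landenAmplitude b)
      ((1 + b) * (1 - b * sin θ ^ 2) / ((1 + b * sin θ ^ 2) * √(1 - b ^ 2 * sin θ ^ 2)))
      θ := by
  have hd := one_add_mul_sin_sq_pos hb θ
  have hq := one_sub_sq_mul_sin_sq_pos hb θ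
  set w := (1 + b) * sin θ / (1 + b * sin θ ^ 2) with hw_def
  have hw : HasDerivAt (fun θ => (1 + b) * sin θ / (1 + b * sin θ ^ 2))
      ((1 + b) * cos θ * (1 - b * sin θ ^ 2) / (1 + b * sin θ ^ 2) ^ 2) θ := by
    have hden : HasDerivAt (fun θ => 1 + b * sin θ ^ 2) (b * (2 * sin θ * cos θ)) θ := by
      simpa using (((hasDerivAt_sin θ).pow 2).const_mul b).const_add 1
    refine (((hasDerivAt_sin θ).const_mul (1 + b)).div hden hd.ne').congr_deriv ?_
    field_simp
    ring
  have h1w : 1 - w ^ 2 = (cos θ * √(1 - b ^ 2 * sin θ ^ 2) / (1 + b * sin θ ^ 2)) ^ 2 := by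
    rw [hw_def, div_pow (cos θ * _), mul_pow, sq_sqrt hq.le, cos_sq']
    field_simp
    ring
  have hroot : √(1 - w ^ 2) = cos θ * √(1 - b ^ 2 * sin θ ^ 2) / (1 + b * sin θ ^ 2) := by
    rw [h1w, sqrt_sq (by positivity)]
  have hw1 : w ^ 2 < 1 := by
    have : 0 < 1 - w ^ 2 := by rw [h1w]; exact pow_pos (by positivity) 2
    linarith
  have harcsin := hasDerivAt_arcsin (x := w) (by nlinarith) (by nlinarith)
  refine (harcsin.comp θ hw).congr_deriv ?_
  rw [hroot]
  field_simp

lemma integral_comp_landenAmplitude_mul (hb : b ^ 2 < 1) (g : ℝ → ℝ) :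
    ∫ θ in (0)..(π / 2), g (landenAmplitude b θ) *
        ((1 + b) * (1 - b * sin θ ^ 2) / ((1 + b * sin θ ^ 2) * √(1 - b ^ 2 * sin θ ^ 2)))
      = ∫ u in (0)..(π / 2), g u := by
  have hb₁ : 0 < 1 + b := by nlinarith
  have hend : landenAmplitude b 0 = 0 ∧ landenAmplitude b (π / 2) = π / 2 := by
    simp [landenAmplitude, div_self hb₁.ne']
  have hcont : Continuous (landenAmplitude b) :=
    continuous_arcsin.comp
      (Continuous.div (by fun_prop) (by fun_prop) fun θ => (one_add_mul_sin_sq_pos hb θ).ne')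
  have hIoo : ∀ θ ∈ Ioo (min 0 (π / 2)) (max 0 (π / 2)), 0 < cos θ := fun θ hθ => by
    rw [min_eq_left pi_div_two_pos.le, max_eq_right pi_div_two_pos.le] at hθ
    exact cos_pos_of_mem_Ioo ⟨by linarith [hθ.1, pi_pos], hθ.2⟩
  have key := integral_comp_mul_deriv_of_deriv_nonneg (g := g) hcont.continuousOn
    (fun θ hθ => hasDerivAt_landenAmplitude hb (hIoo θ hθ)) fun θ _ => by
      have := one_add_mul_sin_sq_pos hb θ
      have := one_sub_sq_mul_sin_sq_pos hb θ
      have : 0 ≤ 1 - b * sin θ ^ 2 := by nlinarith [sin_sq_le_one θ]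
      positivity
  rwa [hend.1, hend.2] at key

lemma sqrt_one_sub_landenModulus_sq_mul_sin_landenAmplitude_sq (hb₀ : 0 ≤ b) (hb₁ : b < 1)
    (θ : ℝ) :
    √(1 - landenModulus b ^ 2 * sin (landenAmplitude b θ) ^ 2)
      = (1 - b * sin θ ^ 2) / (1 + b * sin θ ^ 2) := by
  have hb : b ^ 2 < 1 := by nlinarith
  have hd := one_add_mul_sin_sq_pos hb θ
  have h1b : 0 < 1 + b := by linarith
  rw [sin_landenAmplitude hb, landenModulus, div_pow, mul_pow, sq_sqrt hb₀,
    show 1 - 2 ^ 2 * b / (1 + b) ^ 2 * ((1 + b) * sin θ / (1 + b * sin θ ^ 2)) ^ 2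
      = ((1 - b * sin θ ^ 2) / (1 + b * sin θ ^ 2)) ^ 2 by field_simp; ring]
  exact sqrt_sq (div_nonneg (by nlinarith [sin_sq_le_one θ]) hd.le)

theorem ellipticK_landenModulus (hb₀ : 0 ≤ b) (hb₁ : b < 1) :
    ellipticK (landenModulus b) = (1 + b) * ellipticK b := by
  have hb : b ^ 2 < 1 := by nlinarith
  rw [ellipticK, ← integral_comp_landenAmplitude_mul hb, ellipticK, ← integral_const_mul]
  refine integral_congr fun θ _ => ?_
  have := one_add_mul_sin_sq_pos hb θ
  have : 0 < 1 - b * sin θ ^ 2 := by nlinarith [sin_sq_le_one θ]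
  have := sqrt_pos.2 (one_sub_sq_mul_sin_sq_pos hb θ)
  rw [sqrt_one_sub_landenModulus_sq_mul_sin_landenAmplitude_sq hb₀ hb₁]
  field_simp

noncomputable def landenCorrectionDeriv (b θ : ℝ) : ℝ :=
  (1 - (2 + b + 2 * b ^ 2) * sin θ ^ 2 + 3 * b ^ 2 * sin θ ^ 4 + b ^ 3 * sin θ ^ 6)
    / ((1 + b * sin θ ^ 2) ^ 2 * √(1 - b ^ 2 * sin θ ^ 2))

lemma hasDerivAt_landenCorrection (hb : b ^ 2 < 1) (θ : ℝ) :
    HasDerivAt (fun θ => sin θ * cos θ * √(1 - b ^ 2 * sin θ ^ 2) / (1 + b * sin θ ^ 2))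
      (landenCorrectionDeriv b θ) θ := by
  have hd := one_add_mul_sin_sq_pos hb θ
  have hq := one_sub_sq_mul_sin_sq_pos hb θ
  have hsin2 : HasDerivAt (fun θ => sin θ ^ 2) (2 * sin θ * cos θ) θ := by
    simpa using (hasDerivAt_sin θ).fun_pow 2
  have hroot : HasDerivAt (fun θ => √(1 - b ^ 2 * sin θ ^ 2))
      (-(b ^ 2 * (2 * sin θ * cos θ)) / (2 * √(1 - b ^ 2 * sin θ ^ 2))) θ := by
    refine ((hasDerivAt_sqrt hq.ne').comp θ ((hsin2.const_mul _).const_sub 1)).congr_deriv ?_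
    ring
  refine ((((hasDerivAt_sin θ).mul (hasDerivAt_cos θ)).mul hroot).div
    ((hsin2.const_mul b).const_add 1) hd.ne').congr_deriv ?_
  have hr2 := sq_sqrt hq.le
  have hr := sqrt_pos.2 hq
  have hc := cos_sq' θ
  simp only [Pi.mul_apply, landenCorrectionDeriv]
  generalize √(1 - b ^ 2 * sin θ ^ 2) = r at hr hr2 ⊢
  field_simp
  ring_nf
  rw [hc, hr2]
  ring

lemma continuous_landenCorrectionDeriv (hb : b ^ 2 < 1) : Continuous (landenCorrectionDeriv b) :=
  Continuous.div (by fun_prop) (by fun_prop) fun θ =>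
    mul_ne_zero (pow_ne_zero 2 (one_add_mul_sin_sq_pos hb θ).ne')
      (sqrt_pos.2 (one_sub_sq_mul_sin_sq_pos hb θ)).ne'

lemma integral_landenCorrectionDeriv (hb : b ^ 2 < 1) :
    ∫ θ in (0)..(π / 2), landenCorrectionDeriv b θ = 0 := by
  rw [integral_eq_sub_of_hasDerivAt (fun θ _ => hasDerivAt_landenCorrection hb θ)
    ((continuous_landenCorrectionDeriv hb).intervalIntegrable _ _)]
  simp

theorem ellipticE_landenModulus (hb₀ : 0 ≤ b) (hb₁ : b < 1) :
    ellipticE (landenModulus b) = 2 / (1 + b) * ellipticE b - (1 - b) * ellipticK b := by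
  have hb : b ^ 2 < 1 := by nlinarith
  have hE : IntervalIntegrable (fun θ => √(1 - b ^ 2 * sin θ ^ 2)) volume 0 (π / 2) :=
    Continuous.intervalIntegrable (by fun_prop) _ _
  have hK := (continuous_inv_sqrt_one_sub_sq_mul_sin_sq hb).intervalIntegrable
    (μ := volume) 0 (π / 2)
  have hC := (continuous_landenCorrectionDeriv hb).intervalIntegrable (μ := volume) 0 (π / 2)
  calc ellipticE (landenModulus b)
      = ∫ θ in (0)..(π / 2), (2 / (1 + b) * √(1 - b ^ 2 * sin θ ^ 2)
          - (1 - b) * (1 / √(1 - b ^ 2 * sin θ ^ 2)))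
          + 2 * b / (1 + b) * landenCorrectionDeriv b θ := by
        rw [ellipticE, ← integral_comp_landenAmplitude_mul hb]
        refine integral_congr fun θ _ => ?_
        have := one_add_mul_sin_sq_pos hb θ
        have hq := one_sub_sq_mul_sin_sq_pos hb θ
        have := sqrt_pos.2 hq
        simp only [landenCorrectionDeriv]
        rw [sqrt_one_sub_landenModulus_sq_mul_sin_landenAmplitude_sq hb₀ hb₁]
        field_simp
        ring_nf
        rw [sq_sqrt hq.le]
        ring
    _ = 2 / (1 + b) * ellipticE b - (1 - b) * ellipticK b := by
        rw [integral_add ((hE.const_mul _).sub (hK.const_mul _)) (hC.const_mul _),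
          integral_sub (hE.const_mul _) (hK.const_mul _), integral_const_mul, integral_const_mul,
          integral_const_mul, integral_landenCorrectionDeriv hb, mul_zero, add_zero, ellipticE,
          ellipticK]

end Landen

lemma ellipticK_complement_div_landenModulus {c : ℝ} (hc : c ∈ Ioo 0 1) :
    ellipticK √(1 - c ^ 2) / ellipticK c
      = 2 * (ellipticK √(1 - landenModulus c ^ 2) / ellipticK (landenModulus c)) := by
  obtain ⟨hc₀, hc₁⟩ := hc
  have hc' : 0 ≤ (1 - c) / (1 + c) := div_nonneg (by linarith) (by linarith)
  have hc'₁ : (1 - c) / (1 + c) < 1 := by rw [div_lt_one (by linarith)]; linarith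
  have hKc := ellipticK_pos (k := c) (by nlinarith)
  rw [sqrt_one_sub_landenModulus_sq hc₀.le hc₁.le, ellipticK_landenModulus hc₀.le hc₁,
    ← landenModulus_one_sub_div_one_add (by linarith) hc₁.le,
    ellipticK_landenModulus hc' hc'₁]
  field_simp
  ring

theorem ellipticAlpha_duplication_general (r k k4 : ℝ)
    (hk : k ∈ Set.Ioo (0:ℝ) 1)
    (hkr : ellipticK (Real.sqrt (1 - k^2)) / ellipticK k = Real.sqrt r)
    (hk4 : k4 ∈ Set.Ioo (0:ℝ) 1)
    (hkr4 : ellipticK (Real.sqrt (1 - k4^2)) / ellipticK k4 = Real.sqrt (4*r)) :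
    ellipticAlpha (4*r) k4 = (1 + k4)^2 * ellipticAlpha r k - 2 * Real.sqrt r * k4 := by
  have hsqrt : √(4 * r) = 2 * √r := by
    rw [sqrt_mul zero_le_four, show (4 : ℝ) = 2 ^ 2 by norm_num, sqrt_sq zero_le_two]
  obtain ⟨c, hc, rfl⟩ := exists_landenModulus_eq hk
  obtain rfl : k4 = c := ellipticK_complement_div_strictAntiOn.injOn hk4 hc <| by
    rw [hkr4, hsqrt, ellipticK_complement_div_landenModulus hc, hkr]
  obtain ⟨hk4₀, hk4₁⟩ := hk4
  have := ellipticK_pos (k := k4) (by nlinarith)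
  rw [ellipticAlpha, ellipticAlpha, ellipticK_landenModulus hk4₀.le hk4₁,
    ellipticE_landenModulus hk4₀.le hk4₁, hsqrt]
  have : 0 < 1 + k4 := by linarith
  field_simp
  ring

theorem ellipticAlpha_duplication (r k k4 : ℝ) (hr : 0 < r)
    (hk : k ∈ Set.Ioo (0:ℝ) 1)
    (hkr : ellipticK (Real.sqrt (1 - k^2)) / ellipticK k = Real.sqrt r)
    (hk4 : k4 ∈ Set.Ioo (0:ℝ) 1)
    (hkr4 : ellipticK (Real.sqrt (1 - k4^2)) / ellipticK k4 = Real.sqrt (4*r)) :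
    ellipticAlpha (4*r) k4 = (1 + k4)^2 * ellipticAlpha r k - 2 * Real.sqrt r * k4 :=
  ellipticAlpha_duplication_general r k k4 hk hkr hk4 hkr4
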